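/- arXiv:1911.13024 — 5 statements merged into one kernel-verified Lean document; each statement's English description precedes it below -/
import Mathlib

section
/- Let AF = (AR, Attacks) and AF' = (AR', Attacks') be argumentation frameworks with AF ≼_N AF', and let 𝒮 be a family of maximal conflict-free sets of AF and 𝒮' a family of maximal conflict-free sets of AF'. If for every E ∈ 𝒮 and every E' ∈ 𝒮' it holds that E ⊆ E' (the strong monotony condition), then for every E ∈ 𝒮 and every E' ∈ 𝒮' it holds that E' ⊄ AR or E' = E (the strong reference independence condition). -/
/-- An (abstract) argumentation framework: a finite set of arguments
together with an attack relation on those arguments. -/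
structure ArgFramework (α : Type*) where
  args : Set α
  att : Set (α × α)
  args_finite : args.Finite
  att_sub : att ⊆ args ×ˢ args

namespace ArgFramework

variable {α : Type*}

/-- `S` is conflict-free: no member of `S` attacks a member of `S`. -/
def ConflictFree (F : ArgFramework α) (S : Set α) : Prop :=
  S ⊆ F.args ∧ ∀ a ∈ S, ∀ b ∈ S, (a, b) ∉ F.att

/-- `S` is a maximal (w.r.t. set inclusion) conflict-free set. -/
def MaxConflictFree (F : ArgFramework α) (S : Set α) : Prop :=
  F.ConflictFree S ∧ ∀ T, F.ConflictFree T → S ⊆ T → S = T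

/-- Naive extensions are exactly the maximal conflict-free sets. -/
def NaiveExt (F : ArgFramework α) (S : Set α) : Prop :=
  F.MaxConflictFree S

/-- The range of `S`: `S` together with all arguments attacked by `S`. -/
def range (F : ArgFramework α) (S : Set α) : Set α :=
  S ∪ {b | ∃ a ∈ S, (a, b) ∈ F.att}

/-- `S` is a stage extension: a conflict-free set whose range is maximal
(w.r.t. set inclusion) among ranges of conflict-free sets. -/
def StageExt (F : ArgFramework α) (S : Set α) : Prop :=
  F.ConflictFree S ∧ ¬ ∃ T, F.ConflictFree T ∧ F.range S ⊂ F.range T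

/-- `S` is admissible: conflict-free, and every attacker of a member of `S`
is attacked by some member of `S`. -/
def Admissible (F : ArgFramework α) (S : Set α) : Prop :=
  F.ConflictFree S ∧ ∀ a ∈ S, ∀ b, (b, a) ∈ F.att → ∃ c ∈ S, (c, b) ∈ F.att

/-- `S` is a maximal (w.r.t. set inclusion) admissible set. -/
def MaxAdmissible (F : ArgFramework α) (S : Set α) : Prop :=
  F.Admissible S ∧ ∀ T, F.Admissible T → S ⊆ T → S = T

/-- Preferred extensions are the maximal admissible sets. -/
def PreferredExt (F : ArgFramework α) (S : Set α) : Prop :=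
  F.MaxAdmissible S

/-- `a` is acceptable w.r.t. `S`: every attacker of `a` is attacked by `S`. -/
def Acceptable (F : ArgFramework α) (S : Set α) (a : α) : Prop :=
  ∀ b, (b, a) ∈ F.att → ∃ c ∈ S, (c, b) ∈ F.att

/-- `S` is a complete extension: admissible and containing every argument
acceptable w.r.t. `S`. -/
def CompleteExt (F : ArgFramework α) (S : Set α) : Prop :=
  F.Admissible S ∧ ∀ a ∈ F.args, F.Acceptable S a → a ∈ S

/-- `S` is the grounded extension: the minimal complete extension. -/
def GroundedExt (F : ArgFramework α) (S : Set α) : Prop :=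
  F.CompleteExt S ∧ ∀ T, F.CompleteExt T → S ⊆ T

/-- `S` is a stable extension: conflict-free and attacking every outside argument. -/
def StableExt (F : ArgFramework α) (S : Set α) : Prop :=
  F.ConflictFree S ∧ ∀ b ∈ F.args \ S, ∃ a ∈ S, (a, b) ∈ F.att

/-- `F'` is a normal expansion of `F`: arguments and attacks are only added,
and no added attack is between two arguments of `F`. -/
def NormalExpansion (F F' : ArgFramework α) : Prop :=
  F.args ⊆ F'.args ∧ F.att ⊆ F'.att ∧
    ∀ a b, (a, b) ∈ F'.att → (a, b) ∉ F.att → ¬(a ∈ F.args ∧ b ∈ F.args)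

/-- An attack sequence: a nonempty sequence of pairwise distinct arguments
in which each argument attacks its successor. -/
def AttackSeq (F : ArgFramework α) (l : List α) : Prop :=
  l ≠ [] ∧ l.Nodup ∧ (∀ a ∈ l, a ∈ F.args) ∧
    l.Chain' (fun a b => (a, b) ∈ F.att)

/-- `b` is reachable from `a`: there is an attack sequence from `a` to `b`. -/
def Reachable (F : ArgFramework α) (a b : α) : Prop :=
  ∃ l : List α, F.AttackSeq l ∧ l.head? = some a ∧ l.getLast? = some b

/-- An attack cycle: a sequence `a₁, …, aₙ` (n ≥ 2) of arguments in which each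
argument attacks its successor, `a₁ = aₙ`, and `a₁, …, a_{n-1}` are pairwise
distinct. -/
def AttackCycle (F : ArgFramework α) (l : List α) : Prop :=
  2 ≤ l.length ∧ (∀ a ∈ l, a ∈ F.args) ∧
    l.Chain' (fun a b => (a, b) ∈ F.att) ∧
    l.head? = l.getLast? ∧ l.dropLast.Nodup

/-- `F'` is a non-cyclic expansion of `F`: an expansion whose attack cycles
are exactly the attack cycles of `F`. -/
def NonCyclicExpansion (F F' : ArgFramework α) : Prop :=
  F.args ⊆ F'.args ∧ F.att ⊆ F'.att ∧
    ∀ l, F'.AttackCycle l ↔ F.AttackCycle l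

/-- `F'` is a rational man's expansion of `F`: a normal, non-cyclic expansion
such that no added argument reachable from an initial argument `a` allows `a`
to occur in any attack cycle of `F'`. -/
def RationalManExpansion (F F' : ArgFramework α) : Prop :=
  F.NormalExpansion F' ∧ F.NonCyclicExpansion F' ∧
    ∀ a ∈ F.args, ∀ b ∈ F'.args \ F.args, F'.Reachable a b →
      ∀ l, F'.AttackCycle l → a ∉ l

end ArgFramework

namespace ArgFramework

variable {α : Type*} {F F' : ArgFramework α} {E E' : Set α}

theorem ConflictFree.of_att_subset (hatt : F.att ⊆ F'.att) (hE' : F'.ConflictFree E')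
    (hargs : E' ⊆ F.args) : F.ConflictFree E' :=
  ⟨hargs, fun a ha b hb hab => hE'.2 a ha b hb (hatt hab)⟩

theorem MaxConflictFree.eq_of_subset_of_att_subset (hatt : F.att ⊆ F'.att)
    (hE : F.MaxConflictFree E) (hE' : F'.ConflictFree E') (hEE' : E ⊆ E')
    (hargs : E' ⊆ F.args) : E' = E :=
  (hE.2 E' (hE'.of_att_subset hatt hargs) hEE').symm

end ArgFramework

/-- For families of maximal conflict-free sets of `AF` and of a
normal expansion `AF'`, the strong monotony condition implies the strong
reference independence condition. -/
theorem strong_monotony_implies_strong_reference_independence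
    {α : Type*} (F F' : ArgFramework α)
    (hN : F.NormalExpansion F')
    (S S' : Set (Set α))
    (hS : ∀ E ∈ S, F.MaxConflictFree E)
    (hS' : ∀ E' ∈ S', F'.MaxConflictFree E')
    (hSM : ∀ E ∈ S, ∀ E' ∈ S', E ⊆ E') :
    ∀ E ∈ S, ∀ E' ∈ S', ¬ E' ⊆ F.args ∨ E' = E := by
  intro E hE E' hE'
  by_cases hargs : E' ⊆ F.args
  · exact Or.inr <|
      (hS E hE).eq_of_subset_of_att_subset hN.2.1 (hS' E' hE').1 (hSM E hE E' hE') hargs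
  · exact Or.inl hargs
end

section
/- Let AF = (AR, Attacks) and AF' = (AR', Attacks') be argumentation frameworks with AF ≼_N AF', let 𝒮 be a family of maximal conflict-free sets of AF and 𝒮' a family of maximal conflict-free sets of AF', and let U = ⋃_{E' ∈ 𝒮'} (E' \ AR). If for every E ∈ 𝒮 the following holds: whenever there is no (a, b) ∈ Attacks' with a ∈ U and b ∈ E, there exists E' ∈ 𝒮' with E ⊆ E' (the weak rational monotony condition), then for every E ∈ 𝒮 there exists E' ∈ 𝒮' such that E' ⊄ AR or E' = E (the weak reference independence condition). -/
namespace ArgFramework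

variable {α : Type*} {F F' : ArgFramework α}

theorem ConflictFree.of_att_subset_s2 (hatt : F.att ⊆ F'.att) {T : Set α}
    (hT : F'.ConflictFree T) (hTF : T ⊆ F.args) : F.ConflictFree T :=
  ⟨hTF, fun a ha b hb hab => hT.2 a ha b hb (hatt hab)⟩

end ArgFramework

/-- For families of maximal conflict-free sets of `AF` and of a
normal expansion `AF'`, the weak rational monotony condition implies the weak
reference independence condition. -/
theorem weak_rational_monotony_implies_weak_reference_independence
    {α : Type*} (F F' : ArgFramework α)
    (hN : F.NormalExpansion F')
    (S S' : Set (Set α))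
    (hS : ∀ E ∈ S, F.MaxConflictFree E)
    (hS' : ∀ E' ∈ S', F'.MaxConflictFree E')
    (hWRM : ∀ E ∈ S,
      (¬ ∃ a b, (a, b) ∈ F'.att ∧ a ∈ (⋃ E' ∈ S', E' \ F.args) ∧ b ∈ E) →
      ∃ E' ∈ S', E ⊆ E') :
    ∀ E ∈ S, ∃ E' ∈ S', ¬ E' ⊆ F.args ∨ E' = E := by
  intro E hE
  by_cases hAttU : ∃ a b, (a, b) ∈ F'.att ∧ a ∈ (⋃ E' ∈ S', E' \ F.args) ∧ b ∈ E
  · obtain ⟨a, -, -, haU, -⟩ := hAttU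
    obtain ⟨E', hE', haE', haF⟩ := Set.mem_iUnion₂.1 haU
    exact ⟨E', hE', Or.inl fun hE'F => haF (hE'F haE')⟩
  · obtain ⟨E', hE', hEE'⟩ := hWRM E hE hAttU
    refine ⟨E', hE', or_iff_not_imp_left.2 fun hE'F => ?_⟩
    have hcf : F.ConflictFree E' := (hS' E' hE').1.of_att_subset_s2 hN.2.1 (not_not.1 hE'F)
    exact ((hS E hE).2 E' hcf hEE').symm
end

section
/- There exist argumentation frameworks AF = (AR, Attacks) and AF' = (AR', Attacks') with AF ≼_N AF' such that, for stage semantics, the strong cautious monotony condition holds but the strong reference independence condition fails; i.e., for every stage extension E of AF, if there is no (a, b) ∈ Attacks' with a ∈ AR' \ AR and b ∈ E, then every stage extension E' of AF' satisfies E ⊆ E'; yet there exist a stage extension E of AF and a stage extension E' of AF' with E' ⊆ AR and E' ≠ E. A witness is AF = ({c, d}, {(c, d)}) and AF' = ({c, d, e}, {(c, d), (d, e), (e, e), (e, c)}), whose stage extensions are {{c}} and {{c}, {d}} respectively. -/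
/-!
Every stage extension of `({c, d}, {(c, d)})` contains the unattacked argument `c`, since `{c}`
already has full range. In the expansion the new argument `e` attacks `c`, so the premise of
strong cautious monotony is never met and the condition holds. Strong reference independence
fails because `{d}` is a stage extension of the expansion: conflict-free sets there cannot contain
the self-attacking `e` nor both `c` and `d`, and the ranges `{c, d}` of `{c}` and `{d, e}` of `{d}`
are incomparable.
-/

namespace ArgFramework

variable {α : Type*} (F : ArgFramework α) {S T E : Set α} {a : α}

theorem range_mono (h : S ⊆ T) : F.range S ⊆ F.range T := by
  rintro x (hx | ⟨y, hy, hyx⟩)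
  exacts [Or.inl (h hx), Or.inr ⟨y, h hy, hyx⟩]

theorem range_subset_args (h : S ⊆ F.args) : F.range S ⊆ F.args := by
  rintro x (hx | ⟨y, -, hyx⟩)
  exacts [h hx, (F.att_sub hyx).2]

theorem mem_of_mem_range_of_unattacked (ha : ∀ b, (b, a) ∉ F.att) (h : a ∈ F.range S) :
    a ∈ S := by
  rcases h with h | ⟨b, -, hba⟩
  exacts [h, absurd hba (ha b)]

theorem conflictFree_singleton : F.ConflictFree {a} ↔ a ∈ F.args ∧ (a, a) ∉ F.att := by
  simp [ConflictFree]

theorem stageExt_of_range_eq_args (hS : F.ConflictFree S) (h : F.range S = F.args) :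
    F.StageExt S :=
  ⟨hS, fun ⟨_, hT, hlt⟩ => hlt.2 (h ▸ F.range_subset_args hT.1)⟩

theorem StageExt.range_eq_args {F : ArgFramework α} (hE : F.StageExt E) (hS : F.ConflictFree S)
    (h : F.range S = F.args) : F.range E = F.args := by
  refine (F.range_subset_args hE.1.1).antisymm fun x hx => ?_
  by_contra hxE
  have hlt : F.range E ⊂ F.args := (F.range_subset_args hE.1.1).ssubset_of_mem_notMem hx hxE
  exact hE.2 ⟨S, hS, h ▸ hlt⟩

end ArgFramework

open ArgFramework

/-- The arguments `c, d, e` are encoded as `0, 1, 2`. -/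
def baseAF : ArgFramework ℕ where
  args := {0, 1}
  att := {(0, 1)}
  args_finite := by simp
  att_sub := by simp

def expandedAF : ArgFramework ℕ where
  args := {0, 1, 2}
  att := {(0, 1), (1, 2), (2, 2), (2, 0)}
  args_finite := by simp
  att_sub := by simp [Set.insert_subset_iff]

theorem baseAF_normalExpansion : baseAF.NormalExpansion expandedAF := by
  refine ⟨by simp [baseAF, expandedAF, Set.insert_subset_iff],
    by simp [baseAF, expandedAF], fun a b hab hnew => ?_⟩
  simp only [expandedAF, baseAF, Set.mem_insert_iff, Set.mem_singleton_iff, Prod.mk.injEq]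
    at hab hnew ⊢
  omega

theorem baseAF_conflictFree_zero : baseAF.ConflictFree {0} := by
  simp [conflictFree_singleton, baseAF]

theorem baseAF_range_zero : baseAF.range {0} = baseAF.args := by
  ext x
  simp [ArgFramework.range, baseAF, or_comm]

theorem baseAF_stageExt_zero : baseAF.StageExt {0} :=
  baseAF.stageExt_of_range_eq_args baseAF_conflictFree_zero baseAF_range_zero

theorem zero_mem_of_baseAF_stageExt {E : Set ℕ} (hE : baseAF.StageExt E) : 0 ∈ E := by
  have h0 : 0 ∈ baseAF.range E :=
    hE.range_eq_args baseAF_conflictFree_zero baseAF_range_zero ▸ (by simp [baseAF])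
  exact baseAF.mem_of_mem_range_of_unattacked (by simp [baseAF]) h0

theorem expandedAF_conflictFree {T : Set ℕ} (hT : expandedAF.ConflictFree T) :
    T ⊆ {0} ∨ T ⊆ {1} := by
  obtain ⟨hT_args, hT_free⟩ := hT
  have hT_01 : ∀ x ∈ T, x = 0 ∨ x = 1 := fun x hx => by
    have hx_args := hT_args hx
    simp only [expandedAF, Set.mem_insert_iff, Set.mem_singleton_iff] at hx_args
    rcases hx_args with rfl | rfl | rfl
    exacts [Or.inl rfl, Or.inr rfl, absurd (hT_free 2 hx 2 hx) (by simp [expandedAF])]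
  by_cases h0 : 0 ∈ T
  · refine Or.inl fun x hx => ?_
    rcases hT_01 x hx with rfl | rfl
    exacts [rfl, absurd (hT_free 0 h0 1 hx) (by simp [expandedAF])]
  · exact Or.inr fun x hx => (hT_01 x hx).resolve_left (by rintro rfl; exact h0 hx)

theorem expandedAF_stageExt_one : expandedAF.StageExt {1} := by
  refine ⟨by simp [conflictFree_singleton, expandedAF], fun ⟨T, hT, hlt⟩ => ?_⟩
  rcases expandedAF_conflictFree hT with hT0 | hT1
  · have h2 : 2 ∈ expandedAF.range {0} :=
      expandedAF.range_mono hT0 (hlt.1 (Or.inr ⟨1, rfl, by simp [expandedAF]⟩))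
    simp [ArgFramework.range, expandedAF] at h2
  · exact hlt.2 (expandedAF.range_mono hT1)

/-- For stage semantics, strong cautious monotony does not imply
strong reference independence: there are a framework and a normal expansion
of it for which the strong cautious monotony condition holds but the strong
reference independence condition fails. -/
theorem strong_cautious_monotony_not_implies_strong_reference_independence :
    ∃ F F' : ArgFramework ℕ,
      F.NormalExpansion F' ∧
      (∀ E, F.StageExt E →
        (¬ ∃ a b, (a, b) ∈ F'.att ∧ a ∈ F'.args \ F.args ∧ b ∈ E) →
        ∀ E', F'.StageExt E' → E ⊆ E') ∧
      (∃ E E', F.StageExt E ∧ F'.StageExt E' ∧ E' ⊆ F.args ∧ E' ≠ E) := by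
  refine ⟨baseAF, expandedAF, baseAF_normalExpansion, fun E hE hE_unattacked => ?_,
    {0}, {1}, baseAF_stageExt_zero, expandedAF_stageExt_one, by simp [baseAF], by simp⟩
  exact absurd ⟨2, 0, by simp [expandedAF], by simp [expandedAF, baseAF],
    zero_mem_of_baseAF_stageExt hE⟩ hE_unattacked
end

section
/- Stable semantics violates weak reference independence: there exist argumentation frameworks AF = (AR, Attacks) and AF' = (AR', Attacks') with AF ≼_N AF' and a stable extension E of AF such that there is no stable extension E' of AF' with E' ⊄ AR or E' = E. A witness is AF = ({a, b}, {(a, b)}) and AF' = ({a, b, c}, {(a, b), (b, c), (c, a)}): {a} is the unique stable extension of AF, and AF' has no stable extension at all. -/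
/-
A stable extension must contain every argument whose unique attacker it omits, and omit every
argument whose unique attacker it contains. Along the 3-cycle `0 → 1 → 2 → 0` this makes
membership alternate around a cycle of odd length, which is impossible; so the normal expansion
of `0 → 1` by the argument `2` loses every stable extension, in particular the stable
extension `{0}` of `0 → 1`.
-/

namespace ArgFramework

variable {α : Type*}

theorem StableExt.mem_iff_notMem_of_unique_attacker {F : ArgFramework α} {S : Set α}
    (hS : F.StableExt S) {a b : α} (hb : b ∈ F.args) (hab : (a, b) ∈ F.att)
    (huniq : ∀ c, (c, b) ∈ F.att → c = a) : b ∈ S ↔ a ∉ S := by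
  constructor
  · exact fun hbS haS => hS.1.2 a haS b hbS hab
  · intro haS
    by_contra hbS
    obtain ⟨c, hcS, hcb⟩ := hS.2 b ⟨hb, hbS⟩
    exact haS (huniq c hcb ▸ hcS)

def singleAttack (a b : α) : ArgFramework α where
  args := {a, b}
  att := {(a, b)}
  args_finite := Set.toFinite _
  att_sub := by simp

def attackCycle3 (a b c : α) : ArgFramework α where
  args := {a, b, c}
  att := {(a, b), (b, c), (c, a)}
  args_finite := Set.toFinite _
  att_sub := by
    rintro _ (rfl | rfl | rfl) <;> simp

theorem singleAttack_stableExt {a b : α} (hab : a ≠ b) : (singleAttack a b).StableExt {a} := by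
  refine ⟨⟨by simp [singleAttack], ?_⟩, ?_⟩
  · simp [singleAttack, hab]
  · rintro x ⟨hx, hxa⟩
    obtain rfl : x = b := by
      simp only [singleAttack, Set.mem_insert_iff, Set.mem_singleton_iff] at hx hxa
      tauto
    simp [singleAttack]

theorem singleAttack_normalExpansion_attackCycle3 {a b c : α} (hca : c ≠ a) (hcb : c ≠ b) :
    (singleAttack a b).NormalExpansion (attackCycle3 a b c) := by
  refine ⟨Set.insert_subset_insert (by simp), by simp [singleAttack, attackCycle3], ?_⟩
  rintro x y (h | h | h) hnew <;> simp_all [singleAttack]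

theorem attackCycle3_not_stableExt {a b c : α} (hab : a ≠ b) (hbc : b ≠ c) (hca : c ≠ a)
    (S : Set α) : ¬ (attackCycle3 a b c).StableExt S := by
  intro hS
  have hb := hS.mem_iff_notMem_of_unique_attacker (a := a) (b := b)
    (by simp [attackCycle3]) (by simp [attackCycle3]) (by simp [attackCycle3]; grind)
  have hc := hS.mem_iff_notMem_of_unique_attacker (a := b) (b := c)
    (by simp [attackCycle3]) (by simp [attackCycle3]) (by simp [attackCycle3]; grind)
  have ha := hS.mem_iff_notMem_of_unique_attacker (a := c) (b := a)
    (by simp [attackCycle3]) (by simp [attackCycle3]) (by simp [attackCycle3]; grind)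
  tauto

end ArgFramework

/-- Stable semantics violates weak reference independence:
there are a framework, a normal expansion of it, and a stable extension `E`
of the original framework such that no stable extension `E'` of the expansion
satisfies `E' ⊄ AR` or `E' = E`. -/
theorem stable_violates_weak_reference_independence :
    ∃ F F' : ArgFramework ℕ,
      F.NormalExpansion F' ∧
      ∃ E, F.StableExt E ∧
        ¬ ∃ E', F'.StableExt E' ∧ (¬ E' ⊆ F.args ∨ E' = E) := by
  refine ⟨ArgFramework.singleAttack 0 1, ArgFramework.attackCycle3 0 1 2,
    ArgFramework.singleAttack_normalExpansion_attackCycle3 (by decide) (by decide),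
    {0}, ArgFramework.singleAttack_stableExt (by decide), ?_⟩
  rintro ⟨E', hE', -⟩
  exact ArgFramework.attackCycle3_not_stableExt (by decide) (by decide) (by decide) E' hE'
end

section
/- Let AF = (AR, Attacks) and AF' = (AR', Attacks') be argumentation frameworks with AF ≼_N AF', and let 𝒮 be a family of maximal admissible sets of AF and 𝒮' a family of maximal admissible sets of AF'. If for every E ∈ 𝒮 there exists E' ∈ 𝒮' with E ⊆ E' (the weak monotony condition), then for every E ∈ 𝒮 there exists E' ∈ 𝒮' such that E' ⊄ AR or E' = E (the weak reference independence condition). -/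
/-!
A set of old arguments that is admissible in a normal expansion is already admissible in the
original framework: an attacker of an old argument is old, and an attack between old arguments
is never new. So if the maximal admissible `E' ⊇ E` of `AF'` lies inside `AR`, it is admissible
in `AF`, and maximality of `E` forces `E' = E`.
-/

namespace ArgFramework

variable {α : Type*} {F F' : ArgFramework α}

theorem NormalExpansion.att_iff (hN : F.NormalExpansion F') {a b : α} (ha : a ∈ F.args)
    (hb : b ∈ F.args) : (a, b) ∈ F'.att ↔ (a, b) ∈ F.att :=
  ⟨fun h => by_contra fun h' => hN.2.2 a b h h' ⟨ha, hb⟩, fun h => hN.2.1 h⟩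

theorem NormalExpansion.admissible_of_subset_args (hN : F.NormalExpansion F') {E : Set α}
    (hE : F'.Admissible E) (hEF : E ⊆ F.args) : F.Admissible E := by
  refine ⟨⟨hEF, fun a ha b hb hab => hE.1.2 a ha b hb (hN.2.1 hab)⟩, fun a ha b hba => ?_⟩
  obtain ⟨c, hc, hcb⟩ := hE.2 a ha b (hN.2.1 hba)
  exact ⟨c, hc, (hN.att_iff (hEF hc) (F.att_sub hba).1).1 hcb⟩

end ArgFramework

/-- For families of maximal admissible sets of `AF` and of a
normal expansion `AF'`, the weak monotony condition implies the weak
reference independence condition. -/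
theorem weak_monotony_implies_weak_reference_independence_admissible
    {α : Type*} (F F' : ArgFramework α)
    (hN : F.NormalExpansion F')
    (S S' : Set (Set α))
    (hS : ∀ E ∈ S, F.MaxAdmissible E)
    (hS' : ∀ E' ∈ S', F'.MaxAdmissible E')
    (hWM : ∀ E ∈ S, ∃ E' ∈ S', E ⊆ E') :
    ∀ E ∈ S, ∃ E' ∈ S', ¬ E' ⊆ F.args ∨ E' = E := by
  intro E hE
  obtain ⟨E', hE'S, hEE'⟩ := hWM E hE
  refine ⟨E', hE'S, (em' _).imp_right fun hE'F => ?_⟩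
  exact ((hS E hE).2 E' (hN.admissible_of_subset_args (hS' E' hE'S).1 hE'F) hEE').symm
end
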